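/- arXiv:1707.05440 — 2 statements merged into one kernel-verified Lean document; each statement's English description precedes it below -/
import Mathlib

section
/- Let S be a finite set of points in the plane in general position and let p, q be two distinct points of S. Let T be the geometric graph on S whose edges are: the segment pq, the segment from p to every point of S lying strictly to the left of the directed line from p to q, and the segment from q to every point of S lying strictly to the right of that line. Then T is a plane spanning tree of S. -/
/-!
Every point of `S` other than `p` and `q` lies strictly on one side of the line `pq` (general
position), so it is joined to exactly one of `p`, `q`; since `p` and `q` are adjacent, the graph is
connected, and a cycle would need a third vertex of degree at least two. Two edges sharing an
endpoint cannot cross, as their endpoints would be collinear; an edge from `p` to the left and an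
edge from `q` to the right lie in opposite open half-planes.
-/

/-- Points in the plane. -/
abbrev Pt : Type := ℝ × ℝ

/-- A finite point set is in general position if no three of its points are collinear. -/
def GenPos (S : Finset Pt) : Prop :=
  ∀ p ∈ S, ∀ q ∈ S, ∀ r ∈ S, p ≠ q → p ≠ r → q ≠ r →
    ¬ Collinear ℝ ({p, q, r} : Set Pt)

/-- A geometric graph on `S` (a simple graph on the points of `S`, edges drawn as
straight segments) is plane if the open segments of any two distinct edges are disjoint. -/
def IsPlaneGraph {S : Finset Pt} (G : SimpleGraph {x // x ∈ S}) : Prop :=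
  ∀ a b c d : {x // x ∈ S}, G.Adj a b → G.Adj c d → s(a, b) ≠ s(c, d) →
    openSegment ℝ (a : Pt) (b : Pt) ∩ openSegment ℝ (c : Pt) (d : Pt) = ∅

/-- A plane spanning tree of `S`: a tree on all points of `S` drawn without crossings. -/
def IsPlaneSpanningTree {S : Finset Pt} (G : SimpleGraph {x // x ∈ S}) : Prop :=
  G.IsTree ∧ IsPlaneGraph G

/-- A plane spanning path of `S`: a plane spanning tree in which every vertex
has degree at most two (i.e. a plane Hamiltonian path). -/
def IsPlaneSpanningPath {S : Finset Pt} (G : SimpleGraph {x // x ∈ S}) : Prop :=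
  IsPlaneSpanningTree G ∧
    ∀ v a b c : {x // x ∈ S}, G.Adj v a → G.Adj v b → G.Adj v c →
      (a = b ∨ a = c ∨ b = c)

/-- The open segment spanned by an unordered pair of points. -/
def segOpen (e : Sym2 Pt) : Set Pt :=
  Sym2.lift ⟨fun a b => openSegment ℝ a b, fun a b => openSegment_symm ℝ a b⟩ e

/-- `F` is a crossing family in `S`: a set of nondegenerate segments with endpoints
in `S`, any two of which cross (their open segments intersect). -/
def IsCrossingFamily (S : Finset Pt) (F : Finset (Sym2 Pt)) : Prop :=
  (∀ e ∈ F, ¬ e.IsDiag ∧ ∀ x ∈ e, x ∈ S) ∧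
  (∀ e ∈ F, ∀ f ∈ F, e ≠ f → (segOpen e ∩ segOpen f).Nonempty)

/-- `x` lies strictly to the left of the directed line from `p` to `q`. -/
def leftOf (p q x : Pt) : Prop :=
  0 < (q.1 - p.1) * (x.2 - p.2) - (q.2 - p.2) * (x.1 - p.1)

/-- `x` lies strictly to the right of the directed line from `p` to `q`. -/
def rightOf (p q x : Pt) : Prop :=
  (q.1 - p.1) * (x.2 - p.2) - (q.2 - p.2) * (x.1 - p.1) < 0

/-- The double star on `S` associated with the directed edge `pq`: the edge `pq`,
the edges from `p` to all points strictly left of the directed line `pq`, and the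
edges from `q` to all points strictly right of it. -/
def doubleStar (S : Finset Pt) (p q : Pt) : SimpleGraph {x // x ∈ S} :=
  SimpleGraph.fromRel fun a b =>
    ((a : Pt) = p ∧ (b : Pt) = q) ∨
    ((a : Pt) = p ∧ leftOf p q (b : Pt)) ∨
    ((a : Pt) = q ∧ rightOf p q (b : Pt))

/-- The regular wheel configuration `W_{2n}`: `2n-1` points regularly spaced on the
unit circle together with its center. -/
noncomputable def wheel (n : ℕ) : Finset Pt :=
  insert ((0 : ℝ), (0 : ℝ)) <| (Finset.range (2 * n - 1)).image fun j : ℕ =>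
    (Real.cos (2 * Real.pi * (j : ℝ) / ((2 * n - 1 : ℕ) : ℝ)),
     Real.sin (2 * Real.pi * (j : ℝ) / ((2 * n - 1 : ℕ) : ℝ)))

namespace SimpleGraph

variable {V : Type*} {G : SimpleGraph V}

theorem Walk.IsCycle.not_subsingleton_neighborSet {u v : V} {c : G.Walk u u} (hc : c.IsCycle)
    (hv : v ∈ c.support) : ¬ (G.neighborSet v).Subsingleton := by
  intro hsub
  obtain ⟨x, y, hxy, hxy'⟩ := Set.ncard_eq_two.mp (hc.ncard_neighborSet_toSubgraph_eq_two hv)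
  have hmem : ∀ w ∈ c.toSubgraph.neighborSet v, w ∈ G.neighborSet v :=
    fun w hw => c.toSubgraph.neighborSet_subset v hw
  exact hxy (hsub (hmem x (by simp [hxy'])) (hmem y (by simp [hxy'])))

theorem Walk.IsCycle.exists_mem_support_ne {u : V} {c : G.Walk u u} (hc : c.IsCycle) (a b : V) :
    ∃ v ∈ c.support, v ≠ a ∧ v ≠ b := by
  classical
  have hcard : ({a, b} : Finset V).card < c.support.tail.toFinset.card := by
    rw [List.toFinset_card_of_nodup hc.support_nodup, List.length_tail, c.length_support]
    have := hc.three_le_length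
    have := Finset.card_le_two (a := a) (b := b)
    omega
  obtain ⟨v, hv, hvab⟩ := Finset.exists_mem_notMem_of_card_lt_card hcard
  simp only [Finset.mem_insert, Finset.mem_singleton, not_or] at hvab
  exact ⟨v, List.mem_of_mem_tail (List.mem_toFinset.mp hv), hvab⟩

theorem isAcyclic_of_subsingleton_neighborSet (a b : V)
    (h : ∀ v, v ≠ a → v ≠ b → (G.neighborSet v).Subsingleton) : G.IsAcyclic := by
  intro u c hc
  obtain ⟨v, hv, hva, hvb⟩ := hc.exists_mem_support_ne a b
  exact hc.not_subsingleton_neighborSet hv (h v hva hvb)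

end SimpleGraph

theorem disjoint_openSegment_of_not_collinear {E : Type*} [AddCommGroup E] [Module ℝ E]
    {w u u' : E} (h : ¬ Collinear ℝ ({w, u, u'} : Set E)) :
    Disjoint (openSegment ℝ w u) (openSegment ℝ w u') := by
  rw [Set.disjoint_left]
  intro z hz hz'
  apply h
  rcases eq_or_ne w u with rfl | hwu
  · simpa using collinear_pair ℝ w u'
  rcases eq_or_ne w u' with rfl | hwu'
  · simpa using collinear_pair ℝ u w
  have hline : ∀ {v}, z ∈ openSegment ℝ w v → w ≠ v → v ∈ line[ℝ, w, z] := by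
    intro v hv hwv
    have hwz : w ≠ z := by
      rintro rfl
      exact hwv (left_mem_openSegment_iff.mp hv)
    have hwzv : Wbtw ℝ w z v := mem_segment_iff_wbtw.mp (openSegment_subset_segment ℝ _ _ hv)
    exact hwzv.right_mem_affineSpan_of_left_ne hwz
  refine (collinear_insert_insert_of_mem_affineSpan_pair (hline hz hwu) (hline hz' hwu')).subset ?_
  intro x hx
  simp only [Set.mem_insert_iff, Set.mem_singleton_iff] at hx ⊢
  tauto

section Orientation

variable {p q x z : Pt}

theorem collinear_of_not_leftOf_of_not_rightOf (hpq : p ≠ q) (hl : ¬ leftOf p q x)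
    (hr : ¬ rightOf p q x) : Collinear ℝ ({p, q, x} : Set Pt) := by
  simp only [leftOf, rightOf, not_lt] at hl hr
  have horient : (q.1 - p.1) * (x.2 - p.2) - (q.2 - p.2) * (x.1 - p.1) = 0 := le_antisymm hl hr
  have hnorm : (q.1 - p.1) ^ 2 + (q.2 - p.2) ^ 2 ≠ 0 := by
    intro h0
    exact hpq (Prod.ext (by nlinarith [sq_nonneg (q.1 - p.1), sq_nonneg (q.2 - p.2)])
      (by nlinarith [sq_nonneg (q.1 - p.1), sq_nonneg (q.2 - p.2)]))
  -- the parameter of the orthogonal projection of `x` onto the line `pq`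
  set t := ((x.1 - p.1) * (q.1 - p.1) + (x.2 - p.2) * (q.2 - p.2)) /
    ((q.1 - p.1) ^ 2 + (q.2 - p.2) ^ 2)
  have hx : AffineMap.lineMap p q t = x := by
    rw [AffineMap.lineMap_apply_module]
    refine Prod.ext ?_ ?_
    · simp only [Prod.fst_add, Prod.smul_fst, smul_eq_mul, t]
      field_simp
      linear_combination (q.2 - p.2) * horient
    · simp only [Prod.snd_add, Prod.smul_snd, smul_eq_mul, t]
      field_simp
      linear_combination -(q.1 - p.1) * horient
  rw [Set.pair_comm q x, Set.insert_comm p x]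
  exact collinear_insert_of_mem_affineSpan_pair (hx ▸ AffineMap.lineMap_mem_affineSpan_pair t p q)

theorem leftOf_of_mem_openSegment (hx : leftOf p q x) (hz : z ∈ openSegment ℝ p x) :
    leftOf p q z := by
  obtain ⟨a, b, -, hb, hab, rfl⟩ := hz
  unfold leftOf at hx ⊢
  simp only [Prod.fst_add, Prod.snd_add, Prod.smul_fst, Prod.smul_snd, smul_eq_mul]
  obtain rfl : a = 1 - b := by linarith
  nlinarith [mul_pos hb hx]

theorem rightOf_of_mem_openSegment (hx : rightOf p q x) (hz : z ∈ openSegment ℝ q x) :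
    rightOf p q z := by
  obtain ⟨a, b, -, hb, hab, rfl⟩ := hz
  unfold rightOf at hx ⊢
  simp only [Prod.fst_add, Prod.snd_add, Prod.smul_fst, Prod.smul_snd, smul_eq_mul]
  obtain rfl : a = 1 - b := by linarith
  nlinarith [mul_neg_of_pos_of_neg hb hx]

theorem disjoint_openSegment_of_leftOf_of_rightOf (hx : leftOf p q x) (hz : rightOf p q z) :
    Disjoint (openSegment ℝ p x) (openSegment ℝ q z) :=
  Set.disjoint_left.mpr fun _ hx' hz' =>
    lt_asymm (leftOf_of_mem_openSegment hx hx') (rightOf_of_mem_openSegment hz hz')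

end Orientation

def IsDoubleStarArc (p q a b : Pt) : Prop :=
  (a = p ∧ (b = q ∨ leftOf p q b)) ∨ (a = q ∧ rightOf p q b)

namespace GenPos

variable {S : Finset Pt} {p q b d : Pt}

theorem disjoint_openSegment (hS : GenPos S) {w u u' : Pt} (hw : w ∈ S) (hu : u ∈ S)
    (hu' : u' ∈ S) (hwu : w ≠ u) (hwu' : w ≠ u') (huu' : u ≠ u') :
    Disjoint (openSegment ℝ w u) (openSegment ℝ w u') :=
  disjoint_openSegment_of_not_collinear (hS w hw u hu u' hu' hwu hwu' huu')

theorem leftOf_or_rightOf (hS : GenPos S) {x : Pt} (hp : p ∈ S) (hq : q ∈ S) (hx : x ∈ S)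
    (hpq : p ≠ q) (hxp : x ≠ p) (hxq : x ≠ q) : leftOf p q x ∨ rightOf p q x := by
  by_contra! h
  exact hS p hp q hq x hx hpq hxp.symm hxq.symm
    (collinear_of_not_leftOf_of_not_rightOf hpq h.1 h.2)

theorem disjoint_openSegment_of_rightOf (hS : GenPos S) (hp : p ∈ S) (hb : b ∈ S)
    (hd : d ∈ S) (hpb : p ≠ b) (hqd : q ≠ d) (hne : s(p, b) ≠ s(q, d))
    (hb' : b = q ∨ leftOf p q b) (hd' : rightOf p q d) :
    Disjoint (openSegment ℝ p b) (openSegment ℝ q d) := by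
  rcases hb' with rfl | hb'
  · rw [openSegment_symm]
    exact hS.disjoint_openSegment hb hp hd hpb.symm hqd (by rintro rfl; exact hne Sym2.eq_swap)
  · exact disjoint_openSegment_of_leftOf_of_rightOf hb' hd'

theorem disjoint_openSegment_of_isDoubleStarArc (hS : GenPos S) {a c : Pt} (ha : a ∈ S)
    (hb : b ∈ S) (hc : c ∈ S) (hd : d ∈ S) (hab : a ≠ b) (hcd : c ≠ d)
    (hne : s(a, b) ≠ s(c, d)) (h₁ : IsDoubleStarArc p q a b) (h₂ : IsDoubleStarArc p q c d) :
    Disjoint (openSegment ℝ a b) (openSegment ℝ c d) := by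
  rcases eq_or_ne a c with rfl | hac
  · exact hS.disjoint_openSegment ha hb hd hab hcd (by rintro rfl; exact hne rfl)
  rcases h₁ with ⟨rfl, hb'⟩ | ⟨rfl, hb'⟩ <;> rcases h₂ with ⟨rfl, hd'⟩ | ⟨rfl, hd'⟩
  · exact absurd rfl hac
  · exact hS.disjoint_openSegment_of_rightOf ha hb hd hab hcd hne hb' hd'
  · exact (hS.disjoint_openSegment_of_rightOf hc hd hb hcd hab hne.symm hd' hb').symm
  · exact absurd rfl hac

end GenPos

section DoubleStar

variable {S : Finset Pt} {p q : Pt}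

theorem doubleStar_adj {a b : {x // x ∈ S}} :
    (doubleStar S p q).Adj a b ↔
      a ≠ b ∧ (IsDoubleStarArc p q a b ∨ IsDoubleStarArc p q b a) := by
  simp only [doubleStar, SimpleGraph.fromRel_adj, IsDoubleStarArc, and_or_left, or_assoc]

theorem doubleStar_adj_of_ne {x y : {x // x ∈ S}} (hxp : (x : Pt) ≠ p) (hxq : (x : Pt) ≠ q)
    (h : (doubleStar S p q).Adj x y) :
    ((y : Pt) = p ∧ leftOf p q x) ∨ ((y : Pt) = q ∧ rightOf p q x) := by
  rw [doubleStar_adj] at h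
  rcases h with ⟨-, (⟨hx, -⟩ | ⟨hx, -⟩) | (⟨hy, rfl | hl⟩ | hy)⟩
  · exact absurd hx hxp
  · exact absurd hx hxq
  · exact absurd rfl hxq
  · exact Or.inl ⟨hy, hl⟩
  · exact Or.inr hy

theorem doubleStar_isAcyclic (hp : p ∈ S) (hq : q ∈ S) : (doubleStar S p q).IsAcyclic := by
  refine SimpleGraph.isAcyclic_of_subsingleton_neighborSet ⟨p, hp⟩ ⟨q, hq⟩ fun x hxp hxq => ?_
  replace hxp : (x : Pt) ≠ p := Subtype.coe_ne_coe.mpr hxp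
  replace hxq : (x : Pt) ≠ q := Subtype.coe_ne_coe.mpr hxq
  intro y hy w hw
  rcases doubleStar_adj_of_ne hxp hxq hy with ⟨hy, hl⟩ | ⟨hy, hr⟩ <;>
    rcases doubleStar_adj_of_ne hxp hxq hw with ⟨hw, hl'⟩ | ⟨hw, hr'⟩
  · exact Subtype.ext (hy.trans hw.symm)
  · exact absurd hl (lt_asymm hr')
  · exact absurd hl' (lt_asymm hr)
  · exact Subtype.ext (hy.trans hw.symm)

theorem doubleStar_connected (hS : GenPos S) (hp : p ∈ S) (hq : q ∈ S) (hpq : p ≠ q) :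
    (doubleStar S p q).Connected := by
  set P : {x // x ∈ S} := ⟨p, hp⟩
  set Q : {x // x ∈ S} := ⟨q, hq⟩
  have hPQ : (doubleStar S p q).Adj P Q :=
    doubleStar_adj.mpr ⟨Subtype.coe_ne_coe.mp hpq, Or.inl (Or.inl ⟨rfl, Or.inl rfl⟩)⟩
  refine (SimpleGraph.connected_iff_exists_forall_reachable _).mpr ⟨P, fun x => ?_⟩
  by_cases hxp : (x : Pt) = p
  · rw [show x = P from Subtype.ext hxp]
  by_cases hxq : (x : Pt) = q
  · rw [show x = Q from Subtype.ext hxq]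
    exact hPQ.reachable
  rcases hS.leftOf_or_rightOf hp hq x.2 hpq hxp hxq with hl | hr
  · have hPx : (doubleStar S p q).Adj P x :=
      doubleStar_adj.mpr ⟨Subtype.coe_ne_coe.mp (Ne.symm hxp), Or.inl (Or.inl ⟨rfl, Or.inr hl⟩)⟩
    exact hPx.reachable
  · have hQx : (doubleStar S p q).Adj Q x :=
      doubleStar_adj.mpr ⟨Subtype.coe_ne_coe.mp (Ne.symm hxq), Or.inl (Or.inr ⟨rfl, hr⟩)⟩
    exact hPQ.reachable.trans hQx.reachable

theorem doubleStar_isPlaneGraph (hS : GenPos S) : IsPlaneGraph (doubleStar S p q) := by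
  have key : ∀ {a b c d : {x // x ∈ S}}, a ≠ b → c ≠ d → s(a, b) ≠ s(c, d) →
      IsDoubleStarArc p q a b → IsDoubleStarArc p q c d →
      Disjoint (openSegment ℝ (a : Pt) b) (openSegment ℝ (c : Pt) d) := by
    intro a b c d hab hcd hne h₁ h₂
    refine hS.disjoint_openSegment_of_isDoubleStarArc a.2 b.2 c.2 d.2
      (Subtype.coe_ne_coe.mpr hab) (Subtype.coe_ne_coe.mpr hcd) (fun h => hne ?_) h₁ h₂
    exact Sym2.map.injective Subtype.val_injective (by rwa [Sym2.map_mk, Sym2.map_mk])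
  intro a b c d hab hcd hne
  rw [← Set.disjoint_iff_inter_eq_empty]
  rcases doubleStar_adj.mp hab with ⟨hab, h₁ | h₁⟩ <;>
    rcases doubleStar_adj.mp hcd with ⟨hcd, h₂ | h₂⟩
  · exact key hab hcd hne h₁ h₂
  · rw [openSegment_symm ℝ (c : Pt)]
    exact key hab hcd.symm (by rwa [Sym2.eq_swap (a := d)]) h₁ h₂
  · rw [openSegment_symm ℝ (a : Pt)]
    exact key hab.symm hcd (by rwa [Sym2.eq_swap (a := b)]) h₁ h₂
  · rw [openSegment_symm ℝ (a : Pt), openSegment_symm ℝ (c : Pt)]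
    exact key hab.symm hcd.symm (by rwa [Sym2.eq_swap (a := b), Sym2.eq_swap (a := d)]) h₁ h₂

end DoubleStar

/-- The double star on `S` associated to a directed edge `pq` with
`p, q ∈ S` is a plane spanning tree of `S`. -/
theorem doubleStar_isPlaneSpanningTree (S : Finset Pt) (hgp : GenPos S)
    (p q : Pt) (hp : p ∈ S) (hq : q ∈ S) (hpq : p ≠ q) :
    IsPlaneSpanningTree (doubleStar S p q) :=
  ⟨⟨doubleStar_connected hgp hp hq hpq, doubleStar_isAcyclic hp hq⟩, doubleStar_isPlaneGraph hgp⟩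
end

section
/- For every n ≥ 2, the edge set of the complete geometric graph on the regular wheel configuration W_{2n} (all C(2n,2) segments between pairs of points of W_{2n}) can be partitioned into n classes such that each class is a plane spanning tree of W_{2n}. -/
/-!
Number the rim points of `W_{2n}` counterclockwise `0, …, 2n-2` and the center `2n-1`, and read
the numbers cyclically modulo `2n`. As for `2n` points in convex position, the `n` double stars
with hubs `i` and `i + n` (`i < n`), each hub joined to its `n` cyclic successors, are trees that
partition the edges. They are also plane. Two edges at a common point do not overlap, because no
three points of `W_{2n}` are collinear (`2n - 1` is odd, so no chord passes through the center).
An edge from hub `i` to one of `i + 1, …, i + n - 1` is a chord spanning less than half of the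
circle, so the center and all rim points outside its arc, hence every edge at hub `i + n` disjoint
from it, lie strictly on one side of it.
-/

open Real

/-- Twice the signed area of the triangle `p q x`, positive iff `leftOf p q x`. -/
def orient (p q x : Pt) : ℝ :=
  (q.1 - p.1) * (x.2 - p.2) - (q.2 - p.2) * (x.1 - p.1)

lemma orient_rotate (p q x : Pt) : orient p q x = orient q x p := by
  unfold orient; ring

lemma orient_swap (p q x : Pt) : orient q p x = -orient p q x := by
  unfold orient; ring

lemma orient_self_left (p q : Pt) : orient p q p = 0 := by
  unfold orient; ring

lemma orient_self_right (p q : Pt) : orient p q q = 0 := by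
  unfold orient; ring

lemma orient_affineCombination (p q r s : Pt) {a b : ℝ} (hab : a + b = 1) :
    orient p q (a • r + b • s) = a * orient p q r + b * orient p q s := by
  obtain rfl : b = 1 - a := by linarith
  simp only [orient, Prod.fst_add, Prod.snd_add, Prod.smul_fst, Prod.smul_snd, smul_eq_mul]
  ring

lemma orient_eq_zero_of_mem_openSegment {p q y : Pt} (hy : y ∈ openSegment ℝ p q) :
    orient p q y = 0 := by
  obtain ⟨a, b, -, -, hab, rfl⟩ := hy
  simp [orient_affineCombination p q p q hab, orient_self_left, orient_self_right]

lemma openSegment_inter_eq_empty_of_orient_pos {p q r s : Pt} (hr : 0 < orient p q r)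
    (hs : 0 < orient p q s) : openSegment ℝ p q ∩ openSegment ℝ r s = ∅ := by
  refine Set.eq_empty_of_forall_notMem fun y ⟨hpq, hrs⟩ => ?_
  obtain ⟨a, b, ha, hb, hab, rfl⟩ := hrs
  have := orient_eq_zero_of_mem_openSegment hpq
  rw [orient_affineCombination p q r s hab] at this
  nlinarith [mul_pos ha hr, mul_pos hb hs]

lemma openSegment_inter_openSegment_eq_empty {p q r : Pt} (h : orient p q r ≠ 0) :
    openSegment ℝ p q ∩ openSegment ℝ p r = ∅ := by
  refine Set.eq_empty_of_forall_notMem fun y ⟨hpq, hpr⟩ => ?_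
  obtain ⟨a, b, -, hb, hab, rfl⟩ := hpr
  have := orient_eq_zero_of_mem_openSegment hpq
  rw [orient_affineCombination p q p r hab, orient_self_left, mul_zero, zero_add] at this
  exact h ((mul_eq_zero.1 this).resolve_left hb.ne')

lemma orient_circle (α β γ : ℝ) :
    orient (cos α, sin α) (cos β, sin β) (cos γ, sin γ) =
      4 * sin ((β - α) / 2) * sin ((γ - β) / 2) * sin ((γ - α) / 2) := by
  have hγ : γ - α = (β - α) + (γ - β) := by ring
  have key : ∀ u v : ℝ,
      sin (2 * u) + sin (2 * v) - sin (2 * (u + v)) = 4 * sin u * sin v * sin (u + v) := by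
    intro u v
    simp only [sin_two_mul, sin_add, cos_add]
    linear_combination (-2 * sin u * cos u) * sin_sq_add_cos_sq v +
      (-2 * sin v * cos v) * sin_sq_add_cos_sq u
  have hsum : orient (cos α, sin α) (cos β, sin β) (cos γ, sin γ) =
      sin (β - α) + sin (γ - β) - sin (γ - α) := by
    simp only [orient, sin_sub]; ring
  rw [hsum, hγ, add_div, ← key]
  ring_nf

lemma orient_circle_zero (α β : ℝ) :
    orient (cos α, sin α) (cos β, sin β) 0 = sin (β - α) := by
  simp only [orient, sin_sub, Prod.fst_zero, Prod.snd_zero]; ring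

noncomputable def polygonVertex (m j : ℕ) : Pt :=
  (cos (2 * π * j / m), sin (2 * π * j / m))

section RegularPolygon

variable {m : ℕ}

lemma sin_pi_mul_sub_div_pos {a b : ℕ} (hab : a < b) (hba : b < a + m) :
    0 < sin (π * ((b : ℝ) - a) / m) := by
  have hm : (0 : ℝ) < m := by exact_mod_cast (show 0 < m by omega)
  have hlt : (b : ℝ) - a < m := by
    have : (b : ℝ) < a + m := by exact_mod_cast hba
    linarith
  have hpos : (0 : ℝ) < (b : ℝ) - a := by
    have : (a : ℝ) < b := by exact_mod_cast hab
    linarith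
  apply sin_pos_of_pos_of_lt_pi (by positivity)
  rw [div_lt_iff₀ hm]
  nlinarith [pi_pos]

lemma sin_pi_mul_sub_div_ne_zero {a b : ℕ} (hab : a ≠ b) (ha : a < m) (hb : b < m) :
    sin (π * ((b : ℝ) - a) / m) ≠ 0 := by
  rcases hab.lt_or_gt with h | h
  · exact (sin_pi_mul_sub_div_pos h (by omega)).ne'
  · rw [show π * ((b : ℝ) - a) / m = -(π * ((a : ℝ) - b) / m) by ring, sin_neg, neg_ne_zero]
    exact (sin_pi_mul_sub_div_pos h (by omega)).ne'

lemma orient_polygonVertex (a b c : ℕ) :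
    orient (polygonVertex m a) (polygonVertex m b) (polygonVertex m c) =
      4 * sin (π * ((b : ℝ) - a) / m) * sin (π * ((c : ℝ) - b) / m) *
        sin (π * ((c : ℝ) - a) / m) := by
  have half : ∀ x y : ℝ, (2 * π * x / m - 2 * π * y / m) / 2 = π * (x - y) / m := by
    intro x y; ring
  rw [polygonVertex, polygonVertex, polygonVertex, orient_circle, half, half, half]

lemma orient_polygonVertex_pos {a b c : ℕ} (hab : a < b) (hbc : b < c) (hca : c < a + m) :
    0 < orient (polygonVertex m a) (polygonVertex m b) (polygonVertex m c) := by
  rw [orient_polygonVertex]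
  have := sin_pi_mul_sub_div_pos (m := m) hab (by omega)
  have := sin_pi_mul_sub_div_pos (m := m) hbc (by omega)
  have := sin_pi_mul_sub_div_pos (m := m) (hab.trans hbc) hca
  positivity

lemma orient_polygonVertex_ne_zero {a b c : ℕ} (hab : a ≠ b) (hbc : b ≠ c) (hac : a ≠ c)
    (ha : a < m) (hb : b < m) (hc : c < m) :
    orient (polygonVertex m a) (polygonVertex m b) (polygonVertex m c) ≠ 0 := by
  rw [orient_polygonVertex]
  have := sin_pi_mul_sub_div_ne_zero hab ha hb
  have := sin_pi_mul_sub_div_ne_zero hbc hb hc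
  have := sin_pi_mul_sub_div_ne_zero hac ha hc
  positivity

lemma orient_polygonVertex_zero (a b : ℕ) :
    orient (polygonVertex m a) (polygonVertex m b) 0 = sin (2 * π * ((b : ℝ) - a) / m) := by
  rw [polygonVertex, polygonVertex, orient_circle_zero]
  ring_nf

lemma orient_polygonVertex_zero_pos {a b : ℕ} (hab : a < b) (hba : 2 * (b - a) < m) :
    0 < orient (polygonVertex m a) (polygonVertex m b) 0 := by
  rw [orient_polygonVertex_zero]
  have h := sin_pi_mul_sub_div_pos (m := m) (show 2 * a < 2 * b by omega) (by omega)
  push_cast at h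
  convert h using 2; ring

lemma polygonVertex_add_self (hm : m ≠ 0) (j : ℕ) :
    polygonVertex m (j + m) = polygonVertex m j := by
  have : (m : ℝ) ≠ 0 := by exact_mod_cast hm
  have h : 2 * π * ((j + m : ℕ) : ℝ) / m = 2 * π * j / m + 2 * π := by
    push_cast; field_simp
  simp only [polygonVertex, h, cos_add_two_pi, sin_add_two_pi]

lemma polygonVertex_ne_zero (j : ℕ) : polygonVertex m j ≠ 0 := by
  intro h
  have h1 := congrArg Prod.fst h
  have h2 := congrArg Prod.snd h
  simp only [polygonVertex, Prod.fst_zero, Prod.snd_zero] at h1 h2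
  simpa [h1, h2] using sin_sq_add_cos_sq (2 * π * j / m)

lemma orient_polygonVertex_zero_ne_zero (hm : Odd m) {a b : ℕ} (hab : a ≠ b) (ha : a < m)
    (hb : b < m) : orient (polygonVertex m a) (polygonVertex m b) 0 ≠ 0 := by
  wlog h : a < b generalizing a b
  · rw [← neg_ne_zero, ← orient_swap]
    exact this hab.symm hb ha (by omega)
  obtain ⟨k, rfl⟩ := hm
  rcases lt_or_gt_of_ne (show 2 * (b - a) ≠ 2 * k + 1 by omega) with h2 | h2
  · exact (orient_polygonVertex_zero_pos h h2).ne'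
  · -- going round the other way, from `b` to `a + m`, is the short side
    rw [← polygonVertex_add_self (by omega) a, ← neg_ne_zero, ← orient_swap]
    exact (orient_polygonVertex_zero_pos (by omega) (by omega)).ne'

end RegularPolygon

noncomputable def wheelPt (m j : ℕ) : Pt :=
  if j = m then 0 else polygonVertex m j

section Wheel

variable {m : ℕ}

lemma orient_wheelPt_ne_zero (hm : Odd m) {a b c : ℕ} (hab : a ≠ b) (hbc : b ≠ c)
    (hac : a ≠ c) (ha : a ≤ m) (hb : b ≤ m) (hc : c ≤ m) :
    orient (wheelPt m a) (wheelPt m b) (wheelPt m c) ≠ 0 := by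
  unfold wheelPt
  by_cases ham : a = m
  · rw [if_pos ham, if_neg (by omega), if_neg (by omega), orient_rotate]
    exact orient_polygonVertex_zero_ne_zero hm hbc (by omega) (by omega)
  by_cases hbm : b = m
  · rw [if_neg ham, if_pos hbm, if_neg (by omega), ← orient_rotate]
    exact orient_polygonVertex_zero_ne_zero hm hac.symm (by omega) (by omega)
  by_cases hcm : c = m
  · rw [if_neg ham, if_neg hbm, if_pos hcm]
    exact orient_polygonVertex_zero_ne_zero hm hab (by omega) (by omega)
  rw [if_neg ham, if_neg hbm, if_neg hcm]
  exact orient_polygonVertex_ne_zero hab hbc hac (by omega) (by omega) (by omega)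

lemma orient_wheelPt_pos {a b z : ℕ} (hab : a < b) (hba : 2 * (b - a) < m) (hb : b < m)
    (hz : z ≤ m) (hza : z < a ∨ b < z) :
    0 < orient (wheelPt m a) (wheelPt m b) (wheelPt m z) := by
  unfold wheelPt
  rw [if_neg (by omega), if_neg (by omega)]
  by_cases hzm : z = m
  · rw [if_pos hzm]
    exact orient_polygonVertex_zero_pos hab hba
  rw [if_neg hzm]
  rcases hza with h | h
  · rw [← orient_rotate]
    exact orient_polygonVertex_pos h hab (by omega)
  · exact orient_polygonVertex_pos hab h (by omega)

lemma wheelPt_inj (hm : Odd m) {a b : ℕ} (ha : a ≤ m) (hb : b ≤ m)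
    (h : wheelPt m a = wheelPt m b) : a = b := by
  by_contra hab
  wlog hbm : b ≠ m generalizing a b
  · exact this hb ha h.symm (Ne.symm hab) (by omega)
  by_cases ham : a = m
  · rw [wheelPt, wheelPt, if_pos ham, if_neg hbm] at h
    exact polygonVertex_ne_zero b h.symm
  · have := orient_wheelPt_ne_zero hm hab hbm ham ha hb le_rfl
    rw [h, orient_rotate, orient_self_left] at this
    exact this rfl

end Wheel

lemma mem_wheel_iff {n : ℕ} (hn : 0 < n) {p : Pt} :
    p ∈ wheel n ↔ ∃ j < 2 * n, wheelPt (2 * n - 1) j = p := by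
  simp only [wheel, Finset.mem_insert, Finset.mem_image, Finset.mem_range, wheelPt]
  constructor
  · rintro (rfl | ⟨j, hj, rfl⟩)
    · exact ⟨2 * n - 1, by omega, if_pos rfl⟩
    · exact ⟨j, by omega, if_neg (by omega)⟩
  · rintro ⟨j, hj, rfl⟩
    split_ifs with h
    · exact Or.inl rfl
    · exact Or.inr ⟨j, by omega, rfl⟩

noncomputable def wheelEquiv {n : ℕ} (hn : 0 < n) : Fin (2 * n) ≃ {x // x ∈ wheel n} :=
  Equiv.ofBijective (fun j => ⟨wheelPt (2 * n - 1) j, (mem_wheel_iff hn).2 ⟨j, j.2, rfl⟩⟩)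
    ⟨fun a b h => Fin.ext (wheelPt_inj ⟨n - 1, by omega⟩ (by omega) (by omega)
      (congrArg Subtype.val h)),
    fun p => by
      obtain ⟨j, hj, hp⟩ := (mem_wheel_iff hn).1 p.2
      exact ⟨⟨j, hj⟩, Subtype.ext hp⟩⟩

lemma SimpleGraph.isTree_of_hubs {V : Type*} {G : SimpleGraph V} {p q : V} (hpq : G.Adj p q)
    (hcover : ∀ v, v = p ∨ v = q ∨ G.Adj p v ∨ G.Adj q v)
    (hleaf : ∀ v, v ≠ p → v ≠ q → ∀ x y, G.Adj v x → G.Adj v y → x = y) :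
    G.IsTree := by
  refine ⟨(SimpleGraph.connected_iff_exists_forall_reachable G).2 ⟨p, fun v => ?_⟩, ?_⟩
  · rcases hcover v with rfl | rfl | h | h
    · rfl
    · exact hpq.reachable
    · exact h.reachable
    · exact hpq.reachable.trans h.reachable
  · classical
    intro u c hc
    -- each vertex of a cycle has two distinct neighbours, so the cycle runs inside `{p, q}`
    have hhub : ∀ w ∈ c.support, w = p ∨ w = q := by
      intro w hw
      by_contra! h
      have hc' := hc.rotate hw
      exact hc'.snd_ne_penultimate (hleaf w h.1 h.2 _ _ ((c.rotate w hw).adj_snd hc'.not_nil)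
        ((c.rotate w hw).adj_penultimate hc'.not_nil).symm)
    have hsub : c.support.tail.toFinset ⊆ {p, q} := fun w hw => by
      simpa using hhub w (List.mem_of_mem_tail (List.mem_toFinset.1 hw))
    have hcard := (Finset.card_le_card hsub).trans Finset.card_le_two
    rw [List.toFinset_card_of_nodup hc.support_nodup, List.length_tail, c.length_support] at hcard
    have := hc.three_le_length
    omega

/-- `x` is one of the hubs `i`, `i + n` and `y` is one of its `n` cyclic successors
`x + 1, …, x + n` modulo `2n`. -/
def IsHubEdge (n i x y : ℕ) : Prop :=
  (x = i ∨ x = i + n) ∧ ((x < y ∧ y ≤ x + n) ∨ y + n ≤ x)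

def hubTree (n i : ℕ) : SimpleGraph (Fin (2 * n)) :=
  SimpleGraph.fromRel fun x y => IsHubEdge n i x y

section HubTree

variable {n i : ℕ}

lemma hubTree_adj {x y : Fin (2 * n)} :
    (hubTree n i).Adj x y ↔ x ≠ y ∧ (IsHubEdge n i x y ∨ IsHubEdge n i y x) :=
  SimpleGraph.fromRel_adj _ x y

lemma hubTree_isTree (hi : i < n) : (hubTree n i).IsTree := by
  refine SimpleGraph.isTree_of_hubs (p := ⟨i, by omega⟩) (q := ⟨i + n, by omega⟩) ?_ ?_ ?_
  · simp only [hubTree_adj, IsHubEdge, ne_eq, Fin.ext_iff, true_or, or_true, true_and]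
    omega
  · intro v
    simp only [hubTree_adj, IsHubEdge, ne_eq, Fin.ext_iff, true_or, or_true, true_and]
    omega
  · intro v hp hq x y hx hy
    simp only [hubTree_adj, IsHubEdge, ne_eq, Fin.ext_iff] at *
    omega

lemma eq_of_hubTree_adj {j : ℕ} (hi : i < n) (hj : j < n) {x y : Fin (2 * n)}
    (h : (hubTree n i).Adj x y) (h' : (hubTree n j).Adj x y) : i = j := by
  simp only [hubTree_adj, IsHubEdge] at h h'
  omega

lemma exists_hubTree_adj {x y : Fin (2 * n)} (hxy : x ≠ y) :
    ∃ i < n, (hubTree n i).Adj x y := by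
  have hxy' : x.val ≠ y.val := Fin.val_ne_of_ne hxy
  wlog h : (x < y ∧ y.val ≤ x + n) ∨ y + n ≤ x.val generalizing x y
  · obtain ⟨i, hi, hadj⟩ := this hxy.symm hxy'.symm (by omega)
    exact ⟨i, hi, hadj.symm⟩
  rcases lt_or_ge x.val n with hx | hx
  · exact ⟨x, hx, hubTree_adj.2 ⟨hxy, Or.inl ⟨Or.inl rfl, h⟩⟩⟩
  · exact ⟨x - n, by omega, hubTree_adj.2 ⟨hxy, Or.inl ⟨Or.inr (by omega), h⟩⟩⟩

local notation "w" => wheelPt (2 * n - 1)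

lemma IsHubEdge.openSegment_inter_eq_empty (hi : i < n) {x₁ y₁ x₂ y₂ : ℕ}
    (h₁ : IsHubEdge n i x₁ y₁) (h₂ : IsHubEdge n i x₂ y₂)
    (hy₁ : y₁ < 2 * n) (hy₂ : y₂ < 2 * n)
    (hne : ¬(x₁ = x₂ ∧ y₁ = y₂)) (hne' : ¬(x₁ = y₂ ∧ y₁ = x₂)) :
    openSegment ℝ (w x₁) (w y₁) ∩ openSegment ℝ (w x₂) (w y₂) = ∅ := by
  have shared : ∀ p q r,
      p ≠ q ∧ q ≠ r ∧ p ≠ r ∧ p < 2 * n ∧ q < 2 * n ∧ r < 2 * n →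
      openSegment ℝ (w p) (w q) ∩ openSegment ℝ (w p) (w r) = ∅ := fun p q r h =>
    openSegment_inter_openSegment_eq_empty <| orient_wheelPt_ne_zero ⟨n - 1, by omega⟩
      h.1 h.2.1 h.2.2.1 (by omega) (by omega) (by omega)
  unfold IsHubEdge at h₁ h₂
  by_cases hx : x₁ = x₂
  · subst hx
    exact shared _ _ _ (by omega)
  wlog hx₁ : x₁ = i generalizing x₁ y₁ x₂ y₂
  · rw [Set.inter_comm]
    exact this h₂ h₁ hy₂ hy₁ (by omega) (by omega) (Ne.symm hx) (by omega)
  obtain rfl : x₂ = i + n := by omega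
  subst x₁
  by_cases hb₁ : y₁ = i + n
  · subst y₁
    rw [openSegment_symm ℝ (w i)]
    exact shared _ _ _ (by omega)
  by_cases hb₂ : y₂ = i
  · subst y₂
    rw [openSegment_symm ℝ (w (i + n))]
    exact shared _ _ _ (by omega)
  -- the chord from `i` to `y₁ < i + n` is shorter than a half-turn
  exact openSegment_inter_eq_empty_of_orient_pos
    (orient_wheelPt_pos (by omega) (by omega) (by omega) (by omega) (by omega))
    (orient_wheelPt_pos (by omega) (by omega) (by omega) (by omega) (by omega))

lemma hubTree_openSegment_inter_eq_empty (hi : i < n) {a b c d : Fin (2 * n)}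
    (hab : (hubTree n i).Adj a b) (hcd : (hubTree n i).Adj c d) (hne : s(a, b) ≠ s(c, d)) :
    openSegment ℝ (w a) (w b) ∩ openSegment ℝ (w c) (w d) = ∅ := by
  wlog h₁ : IsHubEdge n i a b generalizing a b
  · rw [openSegment_symm ℝ (w a)]
    exact this hab.symm (by rwa [Sym2.eq_swap]) ((hubTree_adj.1 hab).2.resolve_left h₁)
  wlog h₂ : IsHubEdge n i c d generalizing c d
  · rw [openSegment_symm ℝ (w c)]
    exact this hcd.symm (by rwa [Sym2.eq_swap (a := d)]) ((hubTree_adj.1 hcd).2.resolve_left h₂)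
  refine h₁.openSegment_inter_eq_empty hi h₂ b.2 d.2 (fun h => hne ?_) (fun h => hne ?_)
  · rw [Fin.ext h.1, Fin.ext h.2]
  · rw [Fin.ext h.1, Fin.ext h.2, Sym2.eq_swap]

end HubTree

lemma isPlaneGraph_comap_symm {V : Type*} {S : Finset Pt} (G : SimpleGraph V)
    (e : V ≃ {x // x ∈ S})
    (h : ∀ a b c d, G.Adj a b → G.Adj c d → s(a, b) ≠ s(c, d) →
      openSegment ℝ (e a : Pt) (e b) ∩ openSegment ℝ (e c : Pt) (e d) = ∅) :
    IsPlaneGraph (G.comap e.symm) := by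
  intro a b c d hab hcd hne
  simpa using h _ _ _ _ hab hcd fun h' => hne (by simpa using congrArg (Sym2.map e) h')

/-- For every `n ≥ 2`, the edge set of the complete geometric graph on
the regular wheel configuration `W_{2n}` can be partitioned into `n` plane spanning
trees. -/
theorem wheel_partition_into_trees (n : ℕ) (hn : 2 ≤ n) :
    ∃ T : Fin n → SimpleGraph {x // x ∈ wheel n},
      (∀ i, IsPlaneSpanningTree (T i)) ∧
      (∀ i j, i ≠ j → Disjoint (T i).edgeSet (T j).edgeSet) ∧
      (∀ a b : {x // x ∈ wheel n}, a ≠ b → ∃ i, (T i).Adj a b) := by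
  have hn₀ : 0 < n := by omega
  set e := wheelEquiv hn₀
  refine ⟨fun i => (hubTree n i).comap e.symm, fun i => ⟨?_, ?_⟩, fun i j hij => ?_,
    fun a b hab => ?_⟩
  · exact (SimpleGraph.Iso.comap e.symm (hubTree n i)).isTree_iff.2 (hubTree_isTree i.2)
  · exact isPlaneGraph_comap_symm _ e fun a b c d => hubTree_openSegment_inter_eq_empty i.2
  · refine Set.disjoint_left.2 fun s hi hj => ?_
    induction s using Sym2.ind with
    | _ a b => exact hij (Fin.ext (eq_of_hubTree_adj i.2 j.2 hi hj))
  · obtain ⟨i, hi, h⟩ := exists_hubTree_adj (e.symm.injective.ne hab)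
    exact ⟨⟨i, hi⟩, h⟩
end
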